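/- Let X = (φ,h): Σ → H²×ℝ be a conformal minimal immersion of a simply connected Riemann surface and let X* = (φ*,h*): Σ → H²×ℝ be its conjugate immersion. Then h* is the real harmonic conjugate of h, and the Hopf differential of φ* satisfies Q_{φ*} = −Q_φ. -/

import Mathlib

noncomputable section
open scoped Classical ENNReal
open Complex MeasureTheory Filter Topology Set

namespace SaddleTowers

/-! ## The hyperbolic plane (Poincaré disk model) and the product `H2 × ℝ` -/

/-- The Poincaré disk, as a subset of `ℂ`. -/
def H2 : Set ℂ := {z : ℂ | ‖z‖ < 1}

/-- The boundary at infinity `∂_∞H²` of the hyperbolic plane. -/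
def bdInf : Set ℂ := {z : ℂ | ‖z‖ = 1}

/-- Inverse hyperbolic cosine. -/
def arcosh (x : ℝ) : ℝ := Real.log (x + Real.sqrt (x ^ 2 - 1))

/-- The hyperbolic distance between two points of the Poincaré disk
(the distance of the metric `4/(1-|z|²)² |dz|²`). -/
def hDist (z w : ℂ) : ℝ :=
  arcosh (1 + 2 * ‖z - w‖ ^ 2 /
    ((1 - ‖z‖ ^ 2) * (1 - ‖w‖ ^ 2)))

/-- The distance of the product metric on `H2 × ℝ`. -/
def pDist (p q : ℂ × ℝ) : ℝ := Real.sqrt (hDist p.1 q.1 ^ 2 + (p.2 - q.2) ^ 2)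

/-- The geodesic segment between two points of the disk, via metric betweenness. -/
def hSeg (p q : ℂ) : Set ℂ := {x ∈ H2 | hDist p x + hDist x q = hDist p q}

/-- Hyperbolic convexity of a subset of the disk. -/
def HypConvex (Ω : Set ℂ) : Prop := Ω ⊆ H2 ∧ ∀ p ∈ Ω, ∀ q ∈ Ω, hSeg p q ⊆ Ω

/-- The complete geodesic through two distinct points, via metric collinearity. -/
def hLine (p q : ℂ) : Set ℂ :=
  {x ∈ H2 | hDist p x + hDist x q = hDist p q ∨ hDist x p + hDist p q = hDist x q ∨
    hDist p q + hDist q x = hDist p x}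

/-- The hyperbolic circle of radius `ℓ` centered at `p`. -/
def hCircle (p : ℂ) (ℓ : ℝ) : Set ℂ := {x ∈ H2 | hDist p x = ℓ}

/-- The open horodisk at the ideal point `ξ` (with `|ξ| = 1`) of Euclidean radius `r`:
the Euclidean disk internally tangent to the unit circle at `ξ`. -/
def horodisk (ξ : ℂ) (r : ℝ) : Set ℂ := Metric.ball (((1 - r : ℝ) : ℂ) * ξ) r

/-- The horocycle at the ideal point `ξ` of Euclidean radius `r`. -/
def horocycleAt (ξ : ℂ) (r : ℝ) : Set ℂ := Metric.sphere (((1 - r : ℝ) : ℂ) * ξ) r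

/-- Hyperbolic distance from a point to a set. -/
def hInfDist (p : ℂ) (S : Set ℂ) : ℝ := sInf (hDist p '' S)

/-- Hyperbolic distance between two sets. -/
def hInfDistSet (S T : Set ℂ) : ℝ := sInf (Set.image2 hDist S T)

/-- A unit-speed parametrisation of a complete geodesic of `H2`. -/
def IsCompleteGeodesic (γ : ℝ → ℂ) : Prop :=
  (∀ t, γ t ∈ H2) ∧ ∀ s t : ℝ, hDist (γ s) (γ t) = |s - t|

/-- The complete geodesic joining two ideal boundary points `ξ η`. -/
def idealGeodSet (ξ η : ℂ) : Set ℂ :=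
  {z ∈ H2 | ∃ γ : ℝ → ℂ, IsCompleteGeodesic γ ∧ Tendsto γ atBot (nhds ξ) ∧
    Tendsto γ atTop (nhds η) ∧ z ∈ Set.range γ}

end SaddleTowers

namespace SaddleTowers

/-- A unit-speed geodesic arc in the disk, parametrised on the (possibly infinite)
open interval `(a, b) ⊆ ℝ`. -/
structure GeodArc where
  γ : ℝ → ℂ
  a : EReal
  b : EReal
  lt : a < b
  mem : ∀ t : ℝ, a < (t : EReal) → (t : EReal) < b → γ t ∈ H2
  unit : ∀ s t : ℝ, a < (s : EReal) → (s : EReal) < b → a < (t : EReal) → (t : EReal) < b →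
    hDist (γ s) (γ t) = |s - t|

namespace GeodArc

/-- The parameter interval of the arc. -/
def params (A : GeodArc) : Set ℝ := {t : ℝ | A.a < (t : EReal) ∧ (t : EReal) < A.b}

/-- The underlying set of the (open) arc. -/
def carrier (A : GeodArc) : Set ℂ := A.γ '' A.params

/-- The hyperbolic length of the portion of the arc lying in the set `S`. -/
def lenIn (A : GeodArc) (S : Set ℂ) : ℝ≥0∞ :=
  MeasureTheory.volume {t ∈ A.params | A.γ t ∈ S}

/-- The total hyperbolic length of the arc. -/
def length (A : GeodArc) : ℝ≥0∞ := MeasureTheory.volume A.params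

/-- The filter of parameters approaching the final endpoint. -/
def endFilter (A : GeodArc) : Filter ℝ :=
  if A.b = ⊤ then Filter.atTop else nhdsWithin A.b.toReal A.params

/-- The filter of parameters approaching the initial endpoint. -/
def startFilter (A : GeodArc) : Filter ℝ :=
  if A.a = ⊥ then Filter.atBot else nhdsWithin A.a.toReal A.params

/-- The arc ends (possibly asymptotically) at the point `p` of the closed disk. -/
def endsAt (A : GeodArc) (p : ℂ) : Prop := Filter.Tendsto A.γ A.endFilter (nhds p)

/-- The arc starts (possibly asymptotically) at the point `p` of the closed disk. -/
def startsAt (A : GeodArc) (p : ℂ) : Prop := Filter.Tendsto A.γ A.startFilter (nhds p)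

end GeodArc

/-- An (open) polygonal domain of the hyperbolic plane with `n` cyclically ordered
vertices (possibly ideal) and `n` geodesic edges, `edge i` running from `vertex i`
to `vertex (i+1)`. -/
structure Polygon (n : ℕ) where
  Ω : Set ℂ
  isOpen : IsOpen Ω
  conn : IsConnected Ω
  subset : Ω ⊆ H2
  vertex : ZMod n → ℂ
  vertexIn : ∀ i, ‖vertex i‖ ≤ 1
  edge : ZMod n → GeodArc
  edge_start : ∀ i, (edge i).startsAt (vertex i)
  edge_end : ∀ i, (edge i).endsAt (vertex (i + 1))
  boundary : frontier Ω ∩ H2 = ((⋃ i, (edge i).carrier) ∪ Set.range vertex) ∩ H2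

namespace Polygon

/-- A vertex lying at the boundary at infinity. -/
def IsIdealVertex {n : ℕ} (P : Polygon n) (i : ZMod n) : Prop :=
  ‖P.vertex i‖ = 1

/-- An ideal polygonal domain: all vertices at infinity. -/
def IsIdeal {n : ℕ} (P : Polygon n) : Prop := ∀ i, P.IsIdealVertex i

/-- A bounded polygonal domain: all vertices interior. -/
def IsBounded {n : ℕ} (P : Polygon n) : Prop := ∀ i, ‖P.vertex i‖ < 1

/-- Following the labelling `A₁,B₁,…,A_k,B_k`, the `A`-edges are the
even-indexed ones (edge `0` is `A₁`). -/
def AedgeSet {n : ℕ} (P : Polygon n) : Set ℂ :=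
  ⋃ i ∈ {i : ZMod n | Even i.val}, (P.edge i).carrier

/-- The union of the `B`-edges (odd-indexed). -/
def BedgeSet {n : ℕ} (P : Polygon n) : Set ℂ :=
  ⋃ i ∈ {i : ZMod n | Odd i.val}, (P.edge i).carrier

/-- The union of the chosen horodisks at the ideal vertices; `r i` is the
Euclidean radius of the horodisk at `vertex i` (irrelevant at interior vertices). -/
def horoUnion {n : ℕ} (P : Polygon n) (r : ZMod n → ℝ) : Set ℂ :=
  ⋃ i ∈ {i : ZMod n | P.IsIdealVertex i}, horodisk (P.vertex i) (r i)

/-- A good choice of horocycles at the ideal vertices: each horodisk meets the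
boundary of `Ω` only along the two adjacent edges, and the horodisks are
pairwise disjoint. -/
def GoodHoroRadii {n : ℕ} (P : Polygon n) (r : ZMod n → ℝ) : Prop :=
  (∀ i, P.IsIdealVertex i → 0 < r i ∧ r i < 1 ∧
      horodisk (P.vertex i) (r i) ∩ frontier P.Ω ⊆
        (P.edge (i - 1)).carrier ∪ (P.edge i).carrier) ∧
  ∀ i j, P.IsIdealVertex i → P.IsIdealVertex j → P.vertex i ≠ P.vertex j →
    Disjoint (horodisk (P.vertex i) (r i)) (horodisk (P.vertex j) (r j))

/-- The truncated length `|Γ(Q)|` of the boundary of the polygon `Q`: the total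
length of its edges outside the horodisk union `U`. -/
def gammaLen {m : ℕ} (Q : Polygon m) (U : Set ℂ) : ℝ≥0∞ :=
  ∑' i : ZMod m, (Q.edge i).lenIn Uᶜ

/-- The truncated length `α(Q)` of the part of `∂Q` running along the `A`-edges
of the ambient polygon `P`. -/
def alphaLenIn {m n : ℕ} (Q : Polygon m) (P : Polygon n) (U : Set ℂ) : ℝ≥0∞ :=
  ∑' i : ZMod m, (Q.edge i).lenIn (Uᶜ ∩ P.AedgeSet)

/-- The truncated length `β(Q)` of the part of `∂Q` running along the `B`-edges
of the ambient polygon `P`. -/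
def betaLenIn {m n : ℕ} (Q : Polygon m) (P : Polygon n) (U : Set ℂ) : ℝ≥0∞ :=
  ∑' i : ZMod m, (Q.edge i).lenIn (Uᶜ ∩ P.BedgeSet)

end Polygon

/-- `Q` is a polygonal domain inscribed in `P`: it is contained in `P` and its
vertices are drawn from the vertices of `P`. -/
def Inscribed {m n : ℕ} (Q : Polygon m) (P : Polygon n) : Prop :=
  Q.Ω ⊆ P.Ω ∧ Set.range Q.vertex ⊆ Set.range P.vertex

/-- The Jenkins-Serrin condition for a convex polygonal domain with edges marked
alternately `A` (even indices) and `B` (odd indices): for some good choice of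
horocycles at the ideal vertices, `α(Ω) = β(Ω)` and
`2α(Q) < |Γ(Q)|`, `2β(Q) < |Γ(Q)|` for every inscribed polygonal domain `Q ≠ Ω`. -/
def IsJSDomain {n : ℕ} (P : Polygon n) : Prop :=
  HypConvex P.Ω ∧ ∃ r : ZMod n → ℝ, P.GoodHoroRadii r ∧
    P.alphaLenIn P (P.horoUnion r) = P.betaLenIn P (P.horoUnion r) ∧
    ∀ (m : ℕ) (Q : Polygon m), Inscribed Q P → Q.Ω ≠ P.Ω →
      2 * Q.alphaLenIn P (P.horoUnion r) < Q.gammaLen (P.horoUnion r) ∧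
      2 * Q.betaLenIn P (P.horoUnion r) < Q.gammaLen (P.horoUnion r)

/-! ## The minimal graph equation in the hyperbolic metric -/

/-- The Euclidean gradient of `u : ℂ → ℝ`, as a complex number. -/
def gradE (u : ℂ → ℝ) (z : ℂ) : ℂ :=
  ⟨fderiv ℝ u z 1, fderiv ℝ u z Complex.I⟩

/-- The conformal factor `λ(z) = 2/(1-|z|²)` of the hyperbolic metric. -/
def lam (z : ℂ) : ℝ := 2 / (1 - ‖z‖ ^ 2)

/-- The (Euclidean expression of the) normalized gradient field
`∇u/√(1+|∇u|²)`, all hyperbolic quantities rewritten in Euclidean terms. -/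
def Wfield (u : ℂ → ℝ) (z : ℂ) : ℂ :=
  (Real.sqrt (1 + ‖gradE u z‖ ^ 2 / lam z ^ 2))⁻¹ • gradE u z

/-- The hyperbolic norm of the normalized gradient of `u` (close to `1` where the
gradient of `u` is large). -/
def scalarW (u : ℂ → ℝ) (z : ℂ) : ℝ :=
  ‖gradE u z‖ / (lam z * Real.sqrt (1 + ‖gradE u z‖ ^ 2 / lam z ^ 2))

/-- Euclidean divergence of a vector field `V : ℂ → ℂ`. -/
def divE (V : ℂ → ℂ) (z : ℂ) : ℝ :=
  fderiv ℝ (fun w => (V w).re) z 1 + fderiv ℝ (fun w => (V w).im) z Complex.I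

/-- `u` satisfies the minimal graph equation `div(∇u/√(1+|∇u|²)) = 0` on `Ω`,
all terms calculated in the hyperbolic metric of the Poincaré disk.  (For the
conformal metric `λ²|dz|²` this equation is equivalent to the Euclidean equation
`div₀(∇₀u/√(1+λ⁻²|∇₀u|²)) = 0`.) -/
def MinimalGraphOn (u : ℂ → ℝ) (Ω : Set ℂ) : Prop :=
  ContDiffOn ℝ 2 u Ω ∧ ∀ z ∈ Ω, divE (Wfield u) z = 0

/-- The vertical graph of `u` over `Ω`, as a subset of `H2 × ℝ`. -/
def vGraph (u : ℂ → ℝ) (Ω : Set ℂ) : Set (ℂ × ℝ) := {p : ℂ × ℝ | p.1 ∈ Ω ∧ p.2 = u p.1}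

/-- `u` tends to `+∞` at every point of `A` from within `Ω`. -/
def BdryTop (u : ℂ → ℝ) (Ω A : Set ℂ) : Prop :=
  ∀ p ∈ A, Filter.Tendsto u (nhdsWithin p Ω) Filter.atTop

/-- `u` tends to `-∞` at every point of `A` from within `Ω`. -/
def BdryBot (u : ℂ → ℝ) (Ω A : Set ℂ) : Prop :=
  ∀ p ∈ A, Filter.Tendsto u (nhdsWithin p Ω) Filter.atBot

/-- `u` is a solution of the Jenkins-Serrin problem on the polygon `P`:
it solves the minimal graph equation with boundary values `+∞` on the `A`-edges
(even indices) and `-∞` on the `B`-edges (odd indices). -/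
def IsJSSolution {n : ℕ} (P : Polygon n) (u : ℂ → ℝ) : Prop :=
  MinimalGraphOn u P.Ω ∧
    (∀ i : ZMod n, Even i.val → BdryTop u P.Ω (P.edge i).carrier) ∧
    (∀ i : ZMod n, Odd i.val → BdryBot u P.Ω (P.edge i).carrier)

/-! ## Conformal minimal immersions in `H2 × ℝ` and conjugation -/

/-- Wirtinger derivative `∂f/∂z`. -/
def wD (f : ℂ → ℂ) (z : ℂ) : ℂ :=
  (fderiv ℝ f z 1 - Complex.I * fderiv ℝ f z Complex.I) / 2

/-- Wirtinger derivative `∂f/∂z̄`. -/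
def wDbar (f : ℂ → ℂ) (z : ℂ) : ℂ :=
  (fderiv ℝ f z 1 + Complex.I * fderiv ℝ f z Complex.I) / 2

/-- `∂h/∂z` for a real valued function. -/
def hzD (h : ℂ → ℝ) (z : ℂ) : ℂ := wD (fun w => ((h w : ℝ) : ℂ)) z

/-- Euclidean Laplacian of a real valued function on `ℂ`. -/
def lapl (h : ℂ → ℝ) (z : ℂ) : ℝ :=
  fderiv ℝ (fun w => fderiv ℝ h w 1) z 1 +
    fderiv ℝ (fun w => fderiv ℝ h w Complex.I) z Complex.I

/-- The tension field (harmonic map operator) of a map `φ` into the hyperbolic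
disk: `φ` is harmonic iff `φ_{zz̄} + (2φ̄/(1-|φ|²)) φ_z φ_z̄ = 0`. -/
def tensionD (φ : ℂ → ℂ) (z : ℂ) : ℂ :=
  wDbar (fun w => wD φ w) z +
    (2 * (starRingEnd ℂ) (φ z) / (1 - (‖φ z‖ : ℂ) ^ 2)) * wD φ z * wDbar φ z

/-- The coefficient of the Hopf differential `Q_φ = (λ∘φ)² φ_z (φ_z̄)ᶜ dz²` of a
map `φ` into the hyperbolic disk. -/
def hopf (φ : ℂ → ℂ) (z : ℂ) : ℂ :=
  ((lam (φ z) : ℝ) : ℂ) ^ 2 * wD φ z * (starRingEnd ℂ) (wDbar φ z)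

/-- The conformal factor of the metric induced on the parameter domain by the
immersion `(φ,h)` into `H2 × ℝ`. -/
def rhoSq (φ : ℂ → ℂ) (h : ℂ → ℝ) (z : ℂ) : ℝ :=
  lam (φ z) ^ 2 * (‖wD φ z‖ ^ 2 + ‖wDbar φ z‖ ^ 2) +
    2 * ‖hzD h z‖ ^ 2

/-- A conformal minimal immersion `X = (φ, h) : U → H2 × ℝ`: conformality plus
harmonicity of the height `h` and of the horizontal map `φ` (which for a
conformal immersion is equivalent to minimality). -/
structure CMI (U : Set ℂ) where
  φ : ℂ → ℂ
  h : ℂ → ℝ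
  opn : IsOpen U
  mapsTo : ∀ z ∈ U, φ z ∈ H2
  smooth_φ : ContDiffOn ℝ (⊤ : ℕ∞) φ U
  smooth_h : ContDiffOn ℝ (⊤ : ℕ∞) h U
  immersion : ∀ z ∈ U, 0 < rhoSq φ h z
  conformal : ∀ z ∈ U, hopf φ z + (hzD h z) ^ 2 = 0
  minimal_h : ∀ z ∈ U, lapl h z = 0
  minimal_φ : ∀ z ∈ U, tensionD φ z = 0

namespace CMI

variable {U : Set ℂ}

/-- The immersion as a map into `ℂ × ℝ`. -/
def X (F : CMI U) : ℂ → ℂ × ℝ := fun z => (F.φ z, F.h z)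

/-- The image surface. -/
def image (F : CMI U) : Set (ℂ × ℝ) := F.X '' U

/-- The differential of the immersion, applied to the parameter vector `v ∈ ℂ`. -/
def dX (F : CMI U) (z : ℂ) (v : ℂ) : ℂ × ℝ := (fderiv ℝ F.φ z v, fderiv ℝ F.h z v)

end CMI

/-- The Riemannian product metric of `H2 × ℝ` evaluated at the point with
horizontal coordinate `w`, on the tangent vectors `v u : ℂ × ℝ`. -/
def met (w : ℂ) (v u : ℂ × ℝ) : ℝ :=
  lam w ^ 2 * (v.1 * (starRingEnd ℂ) u.1).re + v.2 * u.2

/-- Coordinates of a tangent vector in the orthonormal frame at a point with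
horizontal coordinate `w`. -/
def toF (w : ℂ) (v : ℂ × ℝ) : Fin 3 → ℝ := ![lam w * v.1.re, lam w * v.1.im, v.2]

/-- The tangent vector with the given orthonormal-frame coordinates. -/
def fromF (w : ℂ) (a : Fin 3 → ℝ) : ℂ × ℝ := (⟨a 0 / lam w, a 1 / lam w⟩, a 2)

/-- Cross product on frame coordinates. -/
def cross3 (a b : Fin 3 → ℝ) : Fin 3 → ℝ :=
  ![a 1 * b 2 - a 2 * b 1, a 2 * b 0 - a 0 * b 2, a 0 * b 1 - a 1 * b 0]

namespace CMI

variable {U : Set ℂ}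

/-- The induced unit normal field of the immersion. -/
def normalVec (F : CMI U) (z : ℂ) : ℂ × ℝ :=
  let n := cross3 (toF (F.φ z) (F.dX z 1)) (toF (F.φ z) (F.dX z Complex.I))
  fromF (F.φ z) (fun j => n j / Real.sqrt (n 0 ^ 2 + n 1 ^ 2 + n 2 ^ 2))

/-- The angle function `ν = ⟨N, ∂/∂t⟩`. -/
def nu (F : CMI U) (z : ℂ) : ℝ := (F.normalVec z).2

/-- The parameter vector field `T` with `dX(T)` the projection of `∂/∂t` onto the
tangent bundle of the surface. -/
def Tfield (F : CMI U) (z : ℂ) : ℂ :=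
  (((fderiv ℝ F.h z 1 : ℝ) : ℂ) + ((fderiv ℝ F.h z Complex.I : ℝ) : ℂ) * Complex.I) /
    ((rhoSq F.φ F.h z : ℝ) : ℂ)

/-- The ambient covariant second derivative `∇_{dX(v)} dX(w)` of the immersion
(the connection of the product of the conformal disk metric with `ℝ`). -/
def covDD (F : CMI U) (z : ℂ) (v w : ℂ) : ℂ × ℝ :=
  (fderiv ℝ (fun y => fderiv ℝ F.φ y w) z v +
      (2 * (starRingEnd ℂ) (F.φ z) / (1 - (‖F.φ z‖ : ℂ) ^ 2)) *
        fderiv ℝ F.φ z v * fderiv ℝ F.φ z w,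
    fderiv ℝ (fun y => fderiv ℝ F.h y w) z v)

/-- The second fundamental form of the immersion on parameter vectors `v w`. -/
def sff (F : CMI U) (z : ℂ) (v w : ℂ) : ℝ :=
  met (F.φ z) (F.covDD z v w) (F.normalVec z)

/-- The symmetric operator on the parameter domain induced by the shape operator
of the immersed surface (using that the induced metric is `ρ²·euclidean`). -/
def shapeOp (F : CMI U) (z : ℂ) (v : ℂ) : ℂ :=
  (((F.sff z v 1 : ℝ) : ℂ) + ((F.sff z v Complex.I : ℝ) : ℂ) * Complex.I) /
    ((rhoSq F.φ F.h z : ℝ) : ℂ)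

/-- The total intrinsic curvature `∫ K dA` of the immersion: for the induced
conformal metric `ρ²|dz|²` one has `K dA = -½ Δ(log ρ²) dx dy`. -/
def totalCurv (F : CMI U) : ℝ :=
  -(1 / 2) * ∫ z in U, lapl (fun w => Real.log (rhoSq F.φ F.h w)) z

end CMI

/-- `G` is the conjugate immersion of `F` in the sense of Daniel: same induced
metric, shape operator `S* = J∘S`, and `∂/∂t = dX*(JT) + ν N*`. -/
def IsConjugatePair {U : Set ℂ} (F G : CMI U) : Prop :=
  (∀ z ∈ U, rhoSq G.φ G.h z = rhoSq F.φ F.h z) ∧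
  (∀ z ∈ U, ∀ v : ℂ, G.shapeOp z v = Complex.I * F.shapeOp z v) ∧
  (∀ z ∈ U, G.dX z (Complex.I * F.Tfield z) + F.nu z • G.normalVec z = ((0 : ℂ), (1 : ℝ)))


/-! ## Isometries, symmetries and global minimal surfaces in `H2 × ℝ` -/

/-- The region `H2 × ℝ` inside the ambient `ℂ × ℝ`. -/
def ambient : Set (ℂ × ℝ) := H2 ×ˢ (Set.univ : Set ℝ)

/-- An isometry of `H2 × ℝ`. -/
def IsIsomH2R (f : ℂ × ℝ → ℂ × ℝ) : Prop :=
  Set.BijOn f ambient ambient ∧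
    ∀ p ∈ ambient, ∀ q ∈ ambient, pDist (f p) (f q) = pDist p q

/-- The vertical translation by `c`. -/
def vT (c : ℝ) : ℂ × ℝ → ℂ × ℝ := fun p => (p.1, p.2 + c)

/-- Invariance under the vertical translation by `c`. -/
def PeriodicBy (S : Set (ℂ × ℝ)) (c : ℝ) : Prop := vT c '' S = S

/-- Reflection across the horizontal slice `H2 × {t₀}`. -/
def reflH (t₀ : ℝ) : ℂ × ℝ → ℂ × ℝ := fun p => (p.1, 2 * t₀ - p.2)

/-- A minimal surface in `H2 × ℝ`: a set which is locally the image of a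
conformal minimal immersion. -/
def IsMinimalSurface (S : Set (ℂ × ℝ)) : Prop :=
  S ⊆ ambient ∧ ∀ p ∈ S, ∃ (U : Set ℂ) (F : CMI U) (W : Set (ℂ × ℝ)),
    W ∈ nhds p ∧ S ∩ W = F.image ∩ W ∧ p ∈ F.image

/-- An embedded minimal surface: around each point it is exactly the image of an
injective conformal minimal immersion. -/
def IsEmbeddedMinimalSurface (S : Set (ℂ × ℝ)) : Prop :=
  S ⊆ ambient ∧ ∀ p ∈ S, ∃ (U : Set ℂ) (F : CMI U) (W : Set (ℂ × ℝ)),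
    W ∈ nhds p ∧ S ∩ W = F.image ∧ Set.InjOn F.X U ∧ p ∈ F.image

/-- Properness (for subsets of `H2 × ℝ`): the surface is closed in `H2 × ℝ`. -/
def ProperlyEmbeddedMinimalSurface (S : Set (ℂ × ℝ)) : Prop :=
  IsEmbeddedMinimalSurface S ∧ ∃ C : Set (ℂ × ℝ), IsClosed C ∧ S = C ∩ ambient

/-- A topological space is a sphere with `m` punctures (genus zero, `m` ends). -/
def IsSphereMinusPoints (X : Type) [TopologicalSpace X] (m : ℕ) : Prop :=
  ∃ P : Finset (EuclideanSpace ℝ (Fin 3)), P.card = m ∧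
    (↑P : Set (EuclideanSpace ℝ (Fin 3))) ⊆ Metric.sphere 0 1 ∧
    Nonempty (X ≃ₜ
      ((Metric.sphere (0 : EuclideanSpace ℝ (Fin 3)) 1 \ ↑P : Set (EuclideanSpace ℝ (Fin 3)))))

/-- Projection of `H2 × ℝ` to the quotient of `H2 × ℝ` by the vertical
translation `vT c`. -/
def projQ (c : ℝ) (p : ℂ × ℝ) : ℂ × AddCircle c := (p.1, (p.2 : AddCircle c))

/-- The half vertical geodesic plane over the geodesic ray `γ([0,∞))`. -/
def halfGeodPlane (γ : ℝ → ℂ) : Set (ℂ × ℝ) := (γ '' Set.Ici (0 : ℝ)) ×ˢ (Set.univ : Set ℝ)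

/-- The vertical geodesic plane over the complete geodesic `γ`. -/
def vertGeodPlane (γ : ℝ → ℂ) : Set (ℂ × ℝ) := Set.range γ ×ˢ (Set.univ : Set ℝ)

/-- Two sets of `H2 × ℝ` are asymptotic: away from a big hyperbolic ball around
the origin they lie within arbitrarily small distance of each other. -/
def AsymptoticSets (E P : Set (ℂ × ℝ)) : Prop :=
  ∀ ε > 0, ∃ R : ℝ, (∀ p ∈ E, R < hDist p.1 0 → ∃ q ∈ P, pDist p q < ε) ∧
    ∀ q ∈ P, R < hDist q.1 0 → ∃ p ∈ E, pDist p q < ε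

/-- A surface invariant by `vT c` has `m` vertical Scherk-type ends in the
quotient by `vT c`: away from a cylinder over a compact set of `H2` it splits
into `m` disjoint pieces, each invariant and asymptotic to (the quotient of)
half a vertical geodesic plane. -/
def HasScherkEnds (S : Set (ℂ × ℝ)) (c : ℝ) (m : ℕ) : Prop :=
  ∃ (γ : Fin m → ℝ → ℂ) (E : Fin m → Set (ℂ × ℝ)),
    (∀ i, IsCompleteGeodesic (γ i)) ∧ (∀ i, E i ⊆ S) ∧ (∀ i, vT c '' E i = E i) ∧
    Pairwise (Function.onFun Disjoint E) ∧
    (∀ i, AsymptoticSets (E i) (halfGeodPlane (γ i))) ∧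
    ∃ K : Set ℂ, IsCompact K ∧ S \ (⋃ i, E i) ⊆ K ×ˢ (Set.univ : Set ℝ)

/-- A surface has `m` ends, each asymptotic to a vertical geodesic plane. -/
def HasVerticalPlanarEnds (S : Set (ℂ × ℝ)) (m : ℕ) : Prop :=
  ∃ (γ : Fin m → ℝ → ℂ) (E : Fin m → Set (ℂ × ℝ)),
    (∀ i, IsCompleteGeodesic (γ i)) ∧ (∀ i, E i ⊆ S) ∧
    Pairwise (Function.onFun Disjoint E) ∧
    (∀ i, AsymptoticSets (E i) (vertGeodPlane (γ i))) ∧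
    ∃ K : Set (ℂ × ℝ), IsCompact K ∧ S \ (⋃ i, E i) ⊆ K

/-- The quotient surface admits a global conformal minimal parametrisation of
total intrinsic curvature `κ` (total curvature of a fundamental domain). -/
def QuotientTotalCurvature (S : Set (ℂ × ℝ)) (c : ℝ) (κ : ℝ) : Prop :=
  ∃ (U : Set ℂ) (F : CMI U), Set.InjOn (projQ c ∘ F.X) U ∧
    projQ c '' F.image = projQ c '' S ∧ F.totalCurv = κ

/-- A surface is globally parametrised with total intrinsic curvature `κ`. -/
def TotalCurvature (S : Set (ℂ × ℝ)) (κ : ℝ) : Prop :=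
  ∃ (U : Set ℂ) (F : CMI U), Set.InjOn F.X U ∧ F.image = S ∧ F.totalCurv = κ

/-- A Saddle Tower in `H2 × ℝ`: a properly embedded singly periodic minimal
surface, invariant by the vertical translation by `c`, with total intrinsic
curvature `4π(1-k)`, genus zero and `2k` vertical Scherk-type ends in the
quotient by the translation. -/
def IsSaddleTower (k : ℕ) (c : ℝ) (S : Set (ℂ × ℝ)) : Prop :=
  ProperlyEmbeddedMinimalSurface S ∧ PeriodicBy S c ∧
    IsSphereMinusPoints (projQ c '' S) (2 * k) ∧
    HasScherkEnds S c (2 * k) ∧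
    QuotientTotalCurvature S c (4 * Real.pi * (1 - (k : ℝ)))

/-- Convergence of a sequence of surfaces to a surface, uniformly on compact
subsets of the ambient space. -/
def LocalLimit (S : ℕ → Set (ℂ × ℝ)) (M : Set (ℂ × ℝ)) : Prop :=
  ∀ ε > 0, ∀ K : Set (ℂ × ℝ), IsCompact K →
    ∀ᶠ n in Filter.atTop,
      S n ∩ K ⊆ Metric.thickening ε M ∧ M ∩ K ⊆ Metric.thickening ε (S n)

/-- A vertical minimal graph (as a subset of `H2 × ℝ`). -/
def IsVerticalGraph (S : Set (ℂ × ℝ)) : Prop :=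
  ∃ (Ω : Set ℂ) (u : ℂ → ℝ), Ω ⊆ H2 ∧ MinimalGraphOn u Ω ∧ S = vGraph u Ω


/-! ## Symmetries, semi-ideal domains, and further notions -/

/-- The reflection of `H2 × ℝ` across the vertical geodesic plane over the
complete geodesic `γ`: the involutive isometry whose fixed point set is exactly
that vertical plane. -/
def IsReflVertPlane (f : ℂ × ℝ → ℂ × ℝ) (γ : ℝ → ℂ) : Prop :=
  IsIsomH2R f ∧ (∀ p ∈ ambient, f (f p) = p) ∧
    {p ∈ ambient | f p = p} = vertGeodPlane γ

/-- The rotation by angle `π` of `H2 × ℝ` about the horizontal geodesic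
`γ × {t₀}`: the involutive isometry whose fixed point set is exactly that
horizontal geodesic. -/
def IsRotHorGeod (f : ℂ × ℝ → ℂ × ℝ) (γ : ℝ → ℂ) (t₀ : ℝ) : Prop :=
  IsIsomH2R f ∧ (∀ p ∈ ambient, f (f p) = p) ∧
    {p ∈ ambient | f p = p} = Set.range γ ×ˢ ({t₀} : Set ℝ)

/-- The reflection of `H2 × ℝ` across the horizontal plane `H2 × {t₀}`. -/
def IsReflHorPlane (f : ℂ × ℝ → ℂ × ℝ) (t₀ : ℝ) : Prop :=
  IsIsomH2R f ∧ (∀ p ∈ ambient, f (f p) = p) ∧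
    {p ∈ ambient | f p = p} = H2 ×ˢ ({t₀} : Set ℝ)

/-- The rotation by angle `π` of `H2 × ℝ` about the vertical straight line
`{q} × ℝ`. -/
def IsRotVertLine (f : ℂ × ℝ → ℂ × ℝ) (q : ℂ) : Prop :=
  IsIsomH2R f ∧ (∀ p ∈ ambient, f (f p) = p) ∧
    {p ∈ ambient | f p = p} = ({q} : Set ℂ) ×ˢ (Set.univ : Set ℝ)

/-- A curve `c` (defined on the parameter set `I`) is a line of curvature of the
immersion `F`: its velocity is everywhere an eigenvector of the shape operator. -/
def IsCurvatureLine {U : Set ℂ} (F : CMI U) (c : ℝ → ℂ) (I : Set ℝ) : Prop :=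
  (∀ t ∈ I, c t ∈ U) ∧ ∀ t ∈ I, deriv c t ≠ 0 ∧
    ∃ κ : ℝ, F.shapeOp (c t) (deriv c t) = ((κ : ℝ) : ℂ) * deriv c t

/-- A semi-ideal polygon (in the labelling used here the odd vertices
`p_{2i-1}` of the paper correspond to even indices): the vertices alternate
between interior points and ideal points. -/
def IsSemiIdeal {k : ℕ} (P : Polygon (2 * k)) : Prop :=
  ∀ i : ZMod (2 * k), (Even i.val → ‖P.vertex i‖ < 1) ∧
    (Odd i.val → ‖P.vertex i‖ = 1)

/-- Condition (★) for a semi-ideal polygon: at each ideal vertex there is a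
small horocycle, meeting `∂Ω` only along the two adjacent edges, which is
equidistant from the two neighbouring interior vertices. -/
def StarCond {k : ℕ} (P : Polygon (2 * k)) : Prop :=
  ∀ i : ZMod (2 * k), Odd i.val → ∃ ρ : ℝ, 0 < ρ ∧ ρ < 1 ∧
    horodisk (P.vertex i) ρ ∩ frontier P.Ω ⊆
      (P.edge (i - 1)).carrier ∪ (P.edge i).carrier ∧
    hInfDist (P.vertex (i - 1)) (horocycleAt (P.vertex i) ρ) =
      hInfDist (P.vertex (i + 1)) (horocycleAt (P.vertex i) ρ)

/-- Condition (★) with a chosen family of horocycles realising the common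
distance `ℓ₀` at every ideal vertex. -/
def StarCondWith {k : ℕ} (P : Polygon (2 * k)) (ℓ₀ : ℝ) (ρ : ZMod (2 * k) → ℝ) : Prop :=
  ∀ i : ZMod (2 * k), Odd i.val → 0 < ρ i ∧ ρ i < 1 ∧
    horodisk (P.vertex i) (ρ i) ∩ frontier P.Ω ⊆
      (P.edge (i - 1)).carrier ∪ (P.edge i).carrier ∧
    hInfDist (P.vertex (i - 1)) (horocycleAt (P.vertex i) (ρ i)) = ℓ₀ ∧
    hInfDist (P.vertex (i + 1)) (horocycleAt (P.vertex i) (ρ i)) = ℓ₀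

/-- Local convexity of the domain `Ω` at a boundary point `p` (a "convexity
point" of the boundary curve with respect to `Ω`). -/
def LocallyConvexAt (Ω : Set ℂ) (p : ℂ) : Prop :=
  ∃ ε > 0, ∀ x ∈ Ω ∩ Metric.ball p ε, ∀ y ∈ Ω ∩ Metric.ball p ε, hSeg x y ⊆ Ω

/-- `C` is a horizontal curvature line of symmetry of the surface `S` at height
`t₀`: it lies in the slice `H2 × {t₀}` and the surface extended by the Schwarz
reflection across this slice is again a minimal surface. -/
def HorSymCurve (S C : Set (ℂ × ℝ)) (t₀ : ℝ) : Prop :=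
  C.Nonempty ∧ IsConnected C ∧ C ⊆ {p : ℂ × ℝ | p.2 = t₀} ∧
    IsMinimalSurface (S ∪ C ∪ reflH t₀ '' S)

/-- The (unoriented Euclidean, hence hyperbolic) angle between two nonzero
vectors of `ℂ`. -/
def vangle (u v : ℂ) : ℝ :=
  Real.arccos ((u * (starRingEnd ℂ) v).re / (‖u‖ * ‖v‖))

/-- The interior angle of a polygon at the vertex `vertex i`, measured between
the incoming edge `edge (i-1)` and the outgoing edge `edge i` (hyperbolic
angles agree with Euclidean ones in the conformal disk model). -/
def Polygon.interiorAngle {n : ℕ} (P : Polygon n) (i : ZMod n) : ℝ :=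
  vangle (-(deriv (P.edge (i - 1)).γ ((P.edge (i - 1)).b.toReal)))
    (deriv (P.edge i).γ ((P.edge i).a.toReal))

/-- The hyperbolic geodesic which is the Euclidean diameter of the disk in the
direction `e^{iα}`. -/
def diam (α : ℝ) : Set ℂ :=
  {z : ℂ | ∃ s : ℝ, -1 < s ∧ s < 1 ∧ z = ((s : ℝ) : ℂ) * Complex.exp (Complex.I * (α : ℂ))}

/-- A divergence line for a sequence of solutions of the minimal graph equation
on `Ω`: a geodesic arc in `Ω` along which the normalized gradients become
vertical (hyperbolic norm of `W` converging to `1`). -/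
def IsDivergenceLine (u : ℕ → ℂ → ℝ) (Ω : Set ℂ) (L : GeodArc) : Prop :=
  L.carrier.Nonempty ∧ L.carrier ⊆ Ω ∧
    ∀ p ∈ L.carrier, Filter.Tendsto (fun n => scalarW (u n) p) Filter.atTop (nhds 1)
/-!
In the orthonormal frame of `H2 × ℝ`, conformality of `X` says exactly that `a = dX(∂ₓ)` and
`b = dX(∂_y)` are orthogonal with `|a|² = |b|² = ρ²`. Hence `(a/ρ, b/ρ, a × b / ρ²)` is an
orthonormal basis, which gives both the decomposition `∂ₜ = dX(T) + ν N` and the injectivity of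
`(v, c) ↦ dX(v) - c N`. Comparing the decomposition for `X*` with the defining relation
`∂ₜ = dX*(JT) + ν N*` forces `T* = JT`; since `X` and `X*` induce the same metric, this is
`∇h* = J ∇h`, the Cauchy–Riemann equations. Then `h*_z = -i h_z`, and conformality
`Q_φ = -h_z²` gives `Q_{φ*} = -Q_φ`.
-/

open Matrix

theorem gram_det_smul_eq_add_add_smul_cross (a b w : Fin 3 → ℝ) :
    (a ⬝ᵥ a * (b ⬝ᵥ b) - (a ⬝ᵥ b) ^ 2) • w =
      (w ⬝ᵥ a * (b ⬝ᵥ b) - w ⬝ᵥ b * (a ⬝ᵥ b)) • a +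
        (w ⬝ᵥ b * (a ⬝ᵥ a) - w ⬝ᵥ a * (a ⬝ᵥ b)) • b + (w ⬝ᵥ a ⨯₃ b) • a ⨯₃ b := by
  ext i
  fin_cases i <;>
    simp [cross_apply, dotProduct, Fin.sum_univ_three] <;> ring

theorem eq_smul_add_smul_add_smul_cross {a b : Fin 3 → ℝ} {r : ℝ} (hr : r ≠ 0)
    (ha : a ⬝ᵥ a = r) (hb : b ⬝ᵥ b = r) (hab : a ⬝ᵥ b = 0) (w : Fin 3 → ℝ) :
    w = (w ⬝ᵥ a / r) • a + (w ⬝ᵥ b / r) • b + (w ⬝ᵥ a ⨯₃ b / r ^ 2) • a ⨯₃ b := by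
  have h := gram_det_smul_eq_add_add_smul_cross a b w
  rw [ha, hb, hab] at h
  simp only [← sq, ne_eq, OfNat.ofNat_ne_zero, not_false_eq_true, zero_pow, mul_zero,
    sub_zero] at h
  refine smul_right_injective _ (pow_ne_zero 2 hr) ?_
  dsimp only
  rw [h]
  match_scalars <;> field_simp

theorem cross_dot_cross_self {a b : Fin 3 → ℝ} {r : ℝ}
    (ha : a ⬝ᵥ a = r) (hb : b ⬝ᵥ b = r) (hab : a ⬝ᵥ b = 0) :
    a ⨯₃ b ⬝ᵥ a ⨯₃ b = r ^ 2 := by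
  rw [cross_dot_cross, ha, hb, hab]; ring

theorem lam_pos {w : ℂ} (hw : w ∈ H2) : 0 < lam w := by
  have hw : ‖w‖ < 1 := hw
  have : ‖w‖ ^ 2 < 1 := by nlinarith [norm_nonneg w]
  exact div_pos two_pos (by linarith)

theorem toF_add (w : ℂ) (v u : ℂ × ℝ) : toF w (v + u) = toF w v + toF w u := by
  ext i; fin_cases i <;> simp [toF, mul_add]

theorem toF_smul (w : ℂ) (c : ℝ) (v : ℂ × ℝ) : toF w (c • v) = c • toF w v := by
  ext i; fin_cases i <;> simp [toF, mul_left_comm]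

theorem toF_injective {w : ℂ} (hw : lam w ≠ 0) : Function.Injective (toF w) := by
  intro v u h
  have h0 := congrFun h 0
  have h1 := congrFun h 1
  have h2 := congrFun h 2
  simp only [toF, cons_val_zero, cons_val_one, cons_val_two, head_cons, tail_cons,
    mul_right_inj' hw] at h0 h1 h2
  exact Prod.ext (Complex.ext h0 h1) h2

theorem toF_fromF {w : ℂ} (hw : lam w ≠ 0) (a : Fin 3 → ℝ) : toF w (fromF w a) = a := by
  ext i; fin_cases i <;> simp [toF, fromF] <;> field_simp

theorem hzD_eq {h : ℂ → ℝ} {z : ℂ} (hd : DifferentiableAt ℝ h z) :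
    hzD h z = ((fderiv ℝ h z 1 : ℂ) - Complex.I * fderiv ℝ h z Complex.I) / 2 := by
  have hofReal : fderiv ℝ (fun w => ((h w : ℝ) : ℂ)) z = Complex.ofRealCLM.comp (fderiv ℝ h z) :=
    (Complex.ofRealCLM.hasFDerivAt.comp z hd.hasFDerivAt).fderiv
  rw [hzD, wD, hofReal]
  rfl

namespace CMI

variable {U : Set ℂ} (F : CMI U) {z : ℂ}

theorem differentiableAt_h (hz : z ∈ U) : DifferentiableAt ℝ F.h z :=
  (F.smooth_h.differentiableOn (by simp)).differentiableAt (F.opn.mem_nhds hz)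

def frameDX (z v : ℂ) : Fin 3 → ℝ := toF (F.φ z) (F.dX z v)

theorem four_mul_hopf_add_hzD_sq (hz : z ∈ U) :
    4 * (hopf F.φ z + hzD F.h z ^ 2) =
      ((F.frameDX z 1 ⬝ᵥ F.frameDX z 1 - F.frameDX z Complex.I ⬝ᵥ F.frameDX z Complex.I : ℝ) : ℂ)
        - 2 * ((F.frameDX z 1 ⬝ᵥ F.frameDX z Complex.I : ℝ) : ℂ) * Complex.I := by
  rw [hzD_eq (F.differentiableAt_h hz)]
  simp only [hopf, wD, wDbar, map_div₀, map_add, map_mul, Complex.conj_I, map_ofNat]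
  apply Complex.ext <;>
    simp [frameDX, toF, dX, dotProduct, Fin.sum_univ_three, pow_two] <;> ring

theorem two_mul_rhoSq (hz : z ∈ U) :
    2 * rhoSq F.φ F.h z =
      F.frameDX z 1 ⬝ᵥ F.frameDX z 1 + F.frameDX z Complex.I ⬝ᵥ F.frameDX z Complex.I := by
  rw [rhoSq, hzD_eq (F.differentiableAt_h hz)]
  simp only [Complex.sq_norm, Complex.normSq_apply]
  simp only [wD, wDbar, frameDX, toF, dX, dotProduct, Fin.sum_univ_three, Fin.isValue,
    cons_val_zero, cons_val_one, cons_val, div_ofNat_re, div_ofNat_im, add_re, add_im, sub_re,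
    sub_im, mul_re, mul_im, I_re, I_im, ofReal_re, ofReal_im]
  ring

theorem frameDX_orthogonal (hz : z ∈ U) :
    F.frameDX z 1 ⬝ᵥ F.frameDX z 1 = rhoSq F.φ F.h z ∧
      F.frameDX z Complex.I ⬝ᵥ F.frameDX z Complex.I = rhoSq F.φ F.h z ∧
      F.frameDX z 1 ⬝ᵥ F.frameDX z Complex.I = 0 := by
  have hconf := F.four_mul_hopf_add_hzD_sq hz
  rw [F.conformal z hz, mul_zero] at hconf
  have hre := congrArg Complex.re hconf
  have him := congrArg Complex.im hconf
  simp only [Complex.zero_re, Complex.zero_im, Complex.sub_re, Complex.sub_im, Complex.mul_re,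
    Complex.mul_im, Complex.ofReal_re, Complex.ofReal_im, Complex.I_re, Complex.I_im,
    Complex.re_ofNat, Complex.im_ofNat] at hre him
  have hρ := F.two_mul_rhoSq hz
  exact ⟨by linarith, by linarith, by linarith⟩

theorem frameDX_apply (v : ℂ) :
    F.frameDX z v = v.re • F.frameDX z 1 + v.im • F.frameDX z Complex.I := by
  have hv : v = v.re • (1 : ℂ) + v.im • Complex.I := by simp [Complex.real_smul]
  have hdX : F.dX z v = v.re • F.dX z 1 + v.im • F.dX z Complex.I := by
    conv_lhs => rw [hv]
    simp only [dX, map_add, map_smul, Prod.smul_mk, Prod.mk_add_mk]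
  rw [frameDX, hdX, toF_add, toF_smul, toF_smul]
  rfl

theorem toF_normalVec (hz : z ∈ U) :
    toF (F.φ z) (F.normalVec z) =
      (rhoSq F.φ F.h z)⁻¹ • F.frameDX z 1 ⨯₃ F.frameDX z Complex.I := by
  obtain ⟨ha, hb, hab⟩ := F.frameDX_orthogonal hz
  have hn := cross_dot_cross_self ha hb hab
  simp only [dotProduct, Fin.sum_univ_three, ← sq, frameDX] at hn
  simp only [normalVec, toF_fromF (lam_pos (F.mapsTo z hz)).ne', cross3, ← cross_apply,
    frameDX, hn, Real.sqrt_sq (F.immersion z hz).le]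
  ext j
  simp [div_eq_inv_mul]

theorem nu_eq (hz : z ∈ U) :
    F.nu z = (rhoSq F.φ F.h z)⁻¹ * (F.frameDX z 1 ⨯₃ F.frameDX z Complex.I) 2 :=
  congrFun (F.toF_normalVec hz) 2

theorem Tfield_eq :
    F.Tfield z = ((F.frameDX z 1 2 / rhoSq F.φ F.h z : ℝ) : ℂ) +
      ((F.frameDX z Complex.I 2 / rhoSq F.φ F.h z : ℝ) : ℂ) * Complex.I := by
  simp only [Tfield, frameDX, toF, dX]
  push_cast
  ring

theorem dX_Tfield_add_nu_smul_normalVec (hz : z ∈ U) :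
    F.dX z (F.Tfield z) + F.nu z • F.normalVec z = ((0 : ℂ), (1 : ℝ)) := by
  obtain ⟨ha, hb, hab⟩ := F.frameDX_orthogonal hz
  have hvert (u : Fin 3 → ℝ) : toF (F.φ z) (0, 1) ⬝ᵥ u = u 2 := by
    simp [dotProduct, toF, Fin.sum_univ_three]
  apply toF_injective (lam_pos (F.mapsTo z hz)).ne'
  rw [toF_add, toF_smul, ← frameDX, frameDX_apply, toF_normalVec _ hz, nu_eq _ hz,
    eq_smul_add_smul_add_smul_cross (F.immersion z hz).ne' ha hb hab (toF (F.φ z) (0, 1)),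
    Tfield_eq]
  simp only [Complex.add_re, Complex.add_im, Complex.mul_re, Complex.mul_im,
    Complex.ofReal_re, Complex.ofReal_im, Complex.I_re, Complex.I_im]
  rw [hvert, hvert, hvert]
  match_scalars <;> ring

theorem eq_zero_of_dX_eq_smul_normalVec (hz : z ∈ U) {c : ℝ} {v : ℂ}
    (hv : F.dX z v = c • F.normalVec z) : v = 0 := by
  obtain ⟨ha, hb, hab⟩ := F.frameDX_orthogonal hz
  have hρ := (F.immersion z hz).ne'
  have hframe := congrArg (toF (F.φ z)) hv
  rw [toF_smul, toF_normalVec _ hz, ← frameDX, frameDX_apply] at hframe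
  have hre := congrArg (F.frameDX z 1 ⬝ᵥ ·) hframe
  have him := congrArg (F.frameDX z Complex.I ⬝ᵥ ·) hframe
  simp only [dotProduct_add, dotProduct_smul, dot_self_cross, dot_cross_self, ha, hb, hab,
    dotProduct_comm (F.frameDX z Complex.I) (F.frameDX z 1), smul_eq_mul, mul_zero,
    add_zero, zero_add] at hre him
  exact Complex.ext (by simpa [hρ] using hre) (by simpa [hρ] using him)

theorem dX_sub (v w : ℂ) : F.dX z (v - w) = F.dX z v - F.dX z w := by
  simp [dX]

end CMI

namespace IsConjugatePair

variable {U : Set ℂ} {F G : CMI U} {z : ℂ}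

theorem I_mul_Tfield (hFG : IsConjugatePair F G) (hz : z ∈ U) :
    Complex.I * F.Tfield z = G.Tfield z := by
  refine sub_eq_zero.mp (G.eq_zero_of_dX_eq_smul_normalVec hz (c := G.nu z - F.nu z) ?_)
  rw [G.dX_sub, eq_sub_of_add_eq (hFG.2.2 z hz),
    eq_sub_of_add_eq (G.dX_Tfield_add_nu_smul_normalVec hz), sub_smul]
  abel

theorem fderiv_h_eq (hFG : IsConjugatePair F G) (hz : z ∈ U) :
    fderiv ℝ G.h z 1 = -fderiv ℝ F.h z Complex.I ∧
      fderiv ℝ G.h z Complex.I = fderiv ℝ F.h z 1 := by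
  have hT := hFG.I_mul_Tfield hz
  have hρ : ((rhoSq F.φ F.h z : ℝ) : ℂ) ≠ 0 := by exact_mod_cast (F.immersion z hz).ne'
  rw [CMI.Tfield, CMI.Tfield, hFG.1 z hz, mul_div_assoc', div_left_inj' hρ] at hT
  have hre := congrArg Complex.re hT
  have him := congrArg Complex.im hT
  simp only [mul_re, mul_im, add_re, add_im, ofReal_re, ofReal_im, I_re, I_im] at hre him
  simp only [mul_zero, mul_one, sub_self, add_zero, zero_mul, zero_add, one_mul, zero_sub] at hre him
  exact ⟨hre.symm, him.symm⟩

theorem hzD_h_eq (hFG : IsConjugatePair F G) (hz : z ∈ U) :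
    hzD G.h z = -Complex.I * hzD F.h z := by
  obtain ⟨h1, hI⟩ := hFG.fderiv_h_eq hz
  rw [hzD_eq (F.differentiableAt_h hz), hzD_eq (G.differentiableAt_h hz), h1, hI]
  push_cast
  linear_combination (-(fderiv ℝ F.h z Complex.I : ℂ) / 2) * Complex.I_mul_I

theorem hopf_φ_eq_neg (hFG : IsConjugatePair F G) (hz : z ∈ U) :
    hopf G.φ z = -hopf F.φ z := by
  rw [eq_neg_of_add_eq_zero_left (G.conformal z hz),
    eq_neg_of_add_eq_zero_left (F.conformal z hz), hFG.hzD_h_eq hz]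
  linear_combination -(hzD F.h z ^ 2) * Complex.I_sq

end IsConjugatePair

theorem conjugate_height_harmonic_conjugate_and_hopf_general (U : Set ℂ)
    (F G : CMI U) (hFG : IsConjugatePair F G) :
    (∀ z ∈ U, fderiv ℝ G.h z 1 = -fderiv ℝ F.h z Complex.I ∧
        fderiv ℝ G.h z Complex.I = fderiv ℝ F.h z 1) ∧
      ∀ z ∈ U, hopf G.φ z = -hopf F.φ z :=
  ⟨fun _ hz => hFG.fderiv_h_eq hz, fun _ hz => hFG.hopf_φ_eq_neg hz⟩

/-- If `X* = (φ*, h*)` is the conjugate immersion of the conformal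
minimal immersion `X = (φ, h)`, then `h*` is the real harmonic conjugate of `h`
(Cauchy-Riemann equations) and the Hopf differential of `φ*` is `Q_{φ*} = -Q_φ`. -/
theorem conjugate_height_harmonic_conjugate_and_hopf (U : Set ℂ)
    (hU : IsConnected U) (hsc : SimplyConnectedSpace U)
    (F G : CMI U) (hFG : IsConjugatePair F G) :
    (∀ z ∈ U, fderiv ℝ G.h z 1 = -fderiv ℝ F.h z Complex.I ∧
        fderiv ℝ G.h z Complex.I = fderiv ℝ F.h z 1) ∧
      ∀ z ∈ U, hopf G.φ z = -hopf F.φ z :=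
  conjugate_height_harmonic_conjugate_and_hopf_general U F G hFG

end SaddleTowers
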